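/- In the iterative construction of the canonical stratification, if M_{d+1} is a simplicial subcomplex of M of dimension at most d+1, then M_d — obtained by deleting from M_{d+1} all simplices isomorphic in Fc_{W_{d+1}}(M) to some (d+1)-simplex — is a simplicial subcomplex of dimension at most d. Equivalently, the deleted set M_{d+1} − M_d contains every (d+1)-simplex of M_{d+1} and is upward closed in the face poset of M_{d+1}. -/

import Mathlib

open CategoryTheory

structure Bisheaf (M : Type) [PartialOrder M] where
  shf : M ⥤ AddCommGrpCat
  csh : Mᵒᵖ ⥤ AddCommGrpCat
  F : ∀ σ : M, shf.obj σ ⟶ csh.obj (Opposite.op σ)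
  compat : ∀ {σ τ : M} (h : σ ≤ τ),
    shf.map (homOfLE h) ≫ F τ ≫ csh.map (homOfLE h).op = F σ

variable {M : Type} [PartialOrder M]

/-- The set `E` of face relations to which the bisheaf assigns isomorphisms. -/
def Bisheaf.E (B : Bisheaf M) (σ τ : M) : Prop :=
  ∃ h : σ ≤ τ, IsIso (B.shf.map (homOfLE h)) ∧ IsIso (B.csh.map (homOfLE h).op)

/-- The collection `W = {(σ ≤ τ) ∈ E | σ ∈ U}`, where
`U = {σ | (σ ≤ ρ) ∈ E for every ρ in the open star of σ}`. -/
def Bisheaf.W (B : Bisheaf M) (σ τ : M) : Prop :=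
  σ ≤ τ ∧ ∀ ρ, σ ≤ ρ → B.E σ ρ

/-- A relation on a poset, viewed as a morphism property on the face-poset category. -/
def mp (W : M → M → Prop) : MorphismProperty M := fun σ τ _ => W σ τ

/-- Two simplices are isomorphic in the localization `Fc_W(M)` of the face poset. -/
def isoIn (W : M → M → Prop) (σ τ : M) : Prop :=
  Nonempty ((mp W).Q.obj σ ≅ (mp W).Q.obj τ)

/-- `U` relative to a subcomplex `A`: simplices of `A` all of whose face relations
within the open star in `A` lie in `E`. -/
def Uof (E : M → M → Prop) (A : Set M) : Set M :=
  {σ | σ ∈ A ∧ ∀ τ ∈ A, σ ≤ τ → E σ τ}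

/-- Enlarge a collection of face relations by all relations out of members of
`Uof E A` into the open star within `A`. -/
def Wadd (E : M → M → Prop) (A : Set M) (Wp : M → M → Prop) : M → M → Prop :=
  fun σ τ => Wp σ τ ∨ (σ ∈ Uof E A ∧ τ ∈ A ∧ σ ≤ τ)

/-- One step of the iterative construction: delete from `P.1` all simplices
isomorphic in the localization about `P.2` to a `(d+1)`-dimensional simplex. -/
def stepM (dim : M → ℕ) (P : Set M × (M → M → Prop)) (d : ℕ) : Set M :=
  {σ | σ ∈ P.1 ∧ ¬ ∃ τ : M, dim τ = d + 1 ∧ isoIn P.2 σ τ}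

/-- One step `(M_{d+1}, W_{d+1}) ↦ (M_d, W_d)` of the iterative construction. -/
def step (E : M → M → Prop) (dim : M → ℕ) (P : Set M × (M → M → Prop)) (d : ℕ) :
    Set M × (M → M → Prop) :=
  (stepM dim P d, Wadd E (stepM dim P d) P.2)

/-- The iterative construction, indexed by the number `j` of steps performed:
`seq E dim m j = (M_{m-j}, W_{m-j})`, starting from `(M_m, W_m) = (M, W)`. -/
def seq (E : M → M → Prop) (dim : M → ℕ) (m : ℕ) : ℕ → Set M × (M → M → Prop)
  | 0 => (Set.univ, Wadd E Set.univ (fun _ _ => False))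
  | j + 1 => step E dim (seq E dim m j) (m - (j + 1))

/-- The subcomplex `M_d` of the iterative construction. -/
def Mseq (B : Bisheaf M) (dim : M → ℕ) (m d : ℕ) : Set M := (seq B.E dim m (m - d)).1

/-- The collection `W_d` of face relations of the iterative construction. -/
def Wseq (B : Bisheaf M) (dim : M → ℕ) (m d : ℕ) : M → M → Prop := (seq B.E dim m (m - d)).2

/-!
A simplex `σ` of `M_{d+1}` of dimension at most `d` that is isomorphic in `Fc_W(M)` to a
`(d+1)`-simplex `τ` cannot be reached from `τ` by going up alone, so some zigzag from `τ` to `σ`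
passes through a `W`-arrow whose source `a` lies below `σ`. Being a face of `σ`, `a` lies in
`M_{d+1}`, and by the construction of `W_{d+1}` it is then `W`-related to every simplex above it
in `M_{d+1}`. Hence every `σ' ≥ σ` in `M_{d+1}` is isomorphic to `a`, hence to `σ` and `τ`: the
deleted set is upward closed, so `M_d` is a subcomplex, and it contains no `(d+1)`-simplex.
-/

/- The localization maps to `Prop` through any monotone predicate that holds at every source of a
`W`-arrow; applied to "lies above `τ` or above a `W`-source", an isomorphism `σ ≅ τ` transports
the predicate from `τ` to `σ`. -/
lemma exists_source_le_of_isoIn {W : M → M → Prop} {σ τ : M} (h : isoIn W σ τ) :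
    τ ≤ σ ∨ ∃ a b, W a b ∧ a ≤ σ := by
  obtain ⟨e⟩ := h
  let reach : M → Prop := fun x => τ ≤ x ∨ ∃ a b, W a b ∧ a ≤ x
  have reach_mono : Monotone reach := by
    rintro x y hxy (hτx | ⟨a, b, hab, hax⟩)
    exacts [Or.inl (hτx.trans hxy), Or.inr ⟨a, b, hab, hax.trans hxy⟩]
  have reach_inverts : (mp W).IsInvertedBy reach_mono.functor := fun a b f hab =>
    (iso_of_both_ways (reach_mono.functor.map f)
      (homOfLE fun _ => Or.inr ⟨a, b, hab, le_rfl⟩)).isIso_hom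
  exact leOfHom ((Localization.Construction.lift _ reach_inverts).map e.inv) (Or.inl le_rfl)

lemma isoIn_of_le {W : M → M → Prop} {σ τ : M} (hle : σ ≤ τ) (hW : W σ τ) : isoIn W σ τ :=
  haveI := (mp W).Q_inverts (homOfLE hle) hW
  ⟨asIso ((mp W).Q.map (homOfLE hle))⟩

lemma isoIn.symm {W : M → M → Prop} {σ τ : M} (h : isoIn W σ τ) : isoIn W τ σ :=
  let ⟨e⟩ := h; ⟨e.symm⟩

lemma isoIn.trans {W : M → M → Prop} {σ τ ρ : M} (h₁ : isoIn W σ τ) (h₂ : isoIn W τ ρ) :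
    isoIn W σ ρ :=
  let ⟨e₁⟩ := h₁; let ⟨e₂⟩ := h₂; ⟨e₁ ≪≫ e₂⟩

def SourceSaturated (W : M → M → Prop) (A : Set M) : Prop :=
  ∀ ⦃a b z⦄, W a b → a ∈ A → z ∈ A → a ≤ z → W a z

section step

variable {dim : M → ℕ} {A : Set M} {W : M → M → Prop} {d : ℕ}

lemma stepM_subset : stepM dim (A, W) d ⊆ A := fun _ h => h.1

lemma notMem_stepM_of_dim_eq {σ : M} (hσ : dim σ = d + 1) : σ ∉ stepM dim (A, W) d :=
  fun h => h.2 ⟨σ, hσ, ⟨Iso.refl _⟩⟩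

lemma notMem_stepM_iff {σ : M} (hσ : σ ∈ A) :
    σ ∉ stepM dim (A, W) d ↔ ∃ τ, dim τ = d + 1 ∧ isoIn W σ τ := by
  simp [stepM, hσ]

lemma isoIn_of_le_of_isoIn (hdim_mono : StrictMono dim) (hA : IsLowerSet A)
    (hW : SourceSaturated W A)
    (hdim : ∀ σ ∈ A, dim σ ≤ d + 1) {σ σ' τ : M} (hσ : σ ∈ A) (hσ' : σ' ∈ A) (hle : σ ≤ σ')
    (hτ : dim τ = d + 1) (hστ : isoIn W σ τ) : isoIn W σ' τ := by
  rcases hle.eq_or_lt with rfl | hlt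
  · exact hστ
  have hσ_low : dim σ ≤ d := by
    have := hdim_mono hlt
    have := hdim σ' hσ'
    omega
  rcases exists_source_le_of_isoIn hστ with hτσ | ⟨a, b, hab, haσ⟩
  · have := hdim_mono.monotone hτσ
    omega
  have haA : a ∈ A := hA haσ hσ
  have haσ' : isoIn W a σ' := isoIn_of_le (haσ.trans hle) (hW hab haA hσ' (haσ.trans hle))
  exact haσ'.symm.trans ((isoIn_of_le haσ (hW hab haA hσ haσ)).trans hστ)

lemma notMem_stepM_of_le (hdim_mono : StrictMono dim) (hA : IsLowerSet A)
    (hW : SourceSaturated W A)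
    (hdim : ∀ σ ∈ A, dim σ ≤ d + 1) {σ σ' : M} (hσ : σ ∈ A) (hσ' : σ' ∈ A) (hle : σ ≤ σ')
    (hσ_del : σ ∉ stepM dim (A, W) d) : σ' ∉ stepM dim (A, W) d := by
  obtain ⟨τ, hτ, hστ⟩ := (notMem_stepM_iff hσ).1 hσ_del
  exact (notMem_stepM_iff hσ').2
    ⟨τ, hτ, isoIn_of_le_of_isoIn hdim_mono hA hW hdim hσ hσ' hle hτ hστ⟩

lemma isLowerSet_stepM (hdim_mono : StrictMono dim) (hA : IsLowerSet A)
    (hW : SourceSaturated W A)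
    (hdim : ∀ σ ∈ A, dim σ ≤ d + 1) : IsLowerSet (stepM dim (A, W) d) := by
  intro x y hyx hx
  by_contra hy
  exact notMem_stepM_of_le hdim_mono hA hW hdim (hA hyx (stepM_subset hx)) (stepM_subset hx)
    hyx hy hx

lemma dim_le_of_mem_stepM (hdim : ∀ σ ∈ A, dim σ ≤ d + 1) {σ : M}
    (hσ : σ ∈ stepM dim (A, W) d) : dim σ ≤ d := by
  have := hdim σ (stepM_subset hσ)
  have : dim σ ≠ d + 1 := fun h => notMem_stepM_of_dim_eq h hσ
  omega

end step

section seq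

variable {E : M → M → Prop} {dim : M → ℕ} {m : ℕ}

lemma mem_Uof_of_subset {A A' : Set M} (hAA' : A ⊆ A') {σ : M} (hσ : σ ∈ A)
    (h : σ ∈ Uof E A') : σ ∈ Uof E A :=
  ⟨hσ, fun τ hτ hle => h.2 τ (hAA' hτ) hle⟩

lemma mem_Uof_seq_of_seq_snd {j : ℕ} {a b : M} (hab : (seq E dim m j).2 a b)
    (ha : a ∈ (seq E dim m j).1) : a ∈ Uof E (seq E dim m j).1 := by
  induction j generalizing b with
  | zero => exact hab.resolve_left id |>.1
  | succ j ih =>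
    rcases hab with hab | ⟨haU, -, -⟩
    · exact mem_Uof_of_subset stepM_subset ha (ih hab (stepM_subset ha))
    · exact haU

lemma seq_snd_of_mem_Uof {j : ℕ} {a z : M} (ha : a ∈ Uof E (seq E dim m j).1)
    (hz : z ∈ (seq E dim m j).1) (hle : a ≤ z) : (seq E dim m j).2 a z := by
  cases j <;> exact Or.inr ⟨ha, hz, hle⟩

lemma sourceSaturated_seq (j : ℕ) : SourceSaturated (seq E dim m j).2 (seq E dim m j).1 :=
  fun _ _ _ hab ha hz hle => seq_snd_of_mem_Uof (mem_Uof_seq_of_seq_snd hab ha) hz hle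

end seq

lemma Mseq_eq_stepM (B : Bisheaf M) (dim : M → ℕ) {m d : ℕ} (hd : d < m) :
    Mseq B dim m d = stepM dim (Mseq B dim m (d + 1), Wseq B dim m (d + 1)) d := by
  obtain ⟨j, hj⟩ : ∃ j, m - d = j + 1 := ⟨m - (d + 1), by omega⟩
  have hdj : m - (d + 1) = j := by omega
  have hmj : m - (j + 1) = d := by omega
  simp only [Mseq, Wseq, hj, hdj, seq, step, hmj]

theorem step_subcomplex_general (B : Bisheaf M) (dim : M → ℕ) (m : ℕ)
    (hstrict : ∀ σ τ : M, σ < τ → dim σ < dim τ)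
    (d : ℕ) (hd : d < m)
    (hsub : IsLowerSet (Mseq B dim m (d + 1)))
    (hdim : ∀ σ ∈ Mseq B dim m (d + 1), dim σ ≤ d + 1) :
    IsLowerSet (Mseq B dim m d) ∧
    (∀ σ ∈ Mseq B dim m d, dim σ ≤ d) ∧
    (∀ σ ∈ Mseq B dim m (d + 1), dim σ = d + 1 → σ ∉ Mseq B dim m d) ∧
    (∀ σ σ' : M, σ ∈ Mseq B dim m (d + 1) → σ' ∈ Mseq B dim m (d + 1) → σ ≤ σ' →
      σ ∉ Mseq B dim m d → σ' ∉ Mseq B dim m d) := by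
  have hW : SourceSaturated (Wseq B dim m (d + 1)) (Mseq B dim m (d + 1)) :=
    sourceSaturated_seq _
  rw [Mseq_eq_stepM B dim hd]
  exact ⟨isLowerSet_stepM hstrict hsub hW hdim, fun σ => dim_le_of_mem_stepM hdim,
    fun σ _ => notMem_stepM_of_dim_eq,
    fun σ σ' => notMem_stepM_of_le hstrict hsub hW hdim⟩

/-- if `M_{d+1}` is a simplicial subcomplex of `M` of dimension at most
`d+1`, then `M_d` is a simplicial subcomplex of dimension at most `d`; equivalently,
the deleted set `M_{d+1} − M_d` contains every `(d+1)`-simplex of `M_{d+1}` and is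
upward closed in the face poset of `M_{d+1}`. -/
theorem step_subcomplex (B : Bisheaf M) (dim : M → ℕ) (m : ℕ)
    (hstrict : ∀ σ τ : M, σ < τ → dim σ < dim τ)
    (hbound : ∀ σ : M, dim σ ≤ m)
    (d : ℕ) (hd : d < m)
    (hsub : IsLowerSet (Mseq B dim m (d + 1)))
    (hdim : ∀ σ ∈ Mseq B dim m (d + 1), dim σ ≤ d + 1) :
    IsLowerSet (Mseq B dim m d) ∧
    (∀ σ ∈ Mseq B dim m d, dim σ ≤ d) ∧
    (∀ σ ∈ Mseq B dim m (d + 1), dim σ = d + 1 → σ ∉ Mseq B dim m d) ∧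
    (∀ σ σ' : M, σ ∈ Mseq B dim m (d + 1) → σ' ∈ Mseq B dim m (d + 1) → σ ≤ σ' →
      σ ∉ Mseq B dim m d → σ' ∉ Mseq B dim m d) :=
  step_subcomplex_general B dim m hstrict d hd hsub hdim
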